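/- arXiv:1011.2987 — 3 statements merged into one kernel-verified Lean document; each statement's English description precedes it below -/
import Mathlib

section
/- Let G be a finitely generated group and let H be either a quotient of G or a finite index subgroup of G. If H has exponential conjugacy growth, then so does G. Similarly, if H has uniform exponential conjugacy growth, then so does G. -/
open scoped Pointwise

/-- `S` is a finite symmetric generating set of `G` containing the identity. -/
def IsSymmGenSet {G : Type*} [Group G] (S : Finset G) : Prop :=
  Subgroup.closure (S : Set G) = ⊤ ∧ (∀ g ∈ S, g⁻¹ ∈ S) ∧ (1 : G) ∈ S

/-- Number of conjugacy classes of `G` meeting the set `A`. -/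
noncomputable def conjClassCount {G : Type*} [Group G] (A : Set G) : ℕ :=
  Set.ncard {c : ConjClasses G | ∃ g ∈ A, ConjClasses.mk g = c}

/-- `c_{G,Σ}(n)`: the number of conjugacy classes of `G` meeting the `n`-ball `Σ^n`. -/
noncomputable def conjGrowth {G : Type*} [Group G] (S : Finset G) (n : ℕ) : ℕ :=
  conjClassCount ((S : Set G) ^ n)

/-- `C_{G,Σ} = liminf_{n→∞} (1/n) log c_{G,Σ}(n)`. -/
noncomputable def conjGrowthRate {G : Type*} [Group G] (S : Finset G) : ℝ :=
  Filter.liminf (fun n : ℕ => Real.log (conjGrowth S n) / n) Filter.atTop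

/-- A group has exponential conjugacy growth if `C_{G,Σ} > 0` for some (equivalently every)
finite symmetric generating set containing the identity. -/
def HasExpConjGrowth (G : Type*) [Group G] : Prop :=
  ∃ S : Finset G, IsSymmGenSet S ∧ 0 < conjGrowthRate S

/-- A group has uniform exponential conjugacy growth if `C_{G,Σ} ≥ ε > 0` for every finite
symmetric generating set containing the identity. -/
def HasUnifExpConjGrowth (G : Type*) [Group G] : Prop :=
  ∃ ε : ℝ, 0 < ε ∧ ∀ S : Finset G, IsSymmGenSet S → ε ≤ conjGrowthRate S

/-!
A surjection `π : G →* H` maps balls onto balls and conjugacy classes onto conjugacy classes, so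
`c_{H,π(Σ)}(n) ≤ c_{G,Σ}(n)`; lifting a generating set of `H` into one of `G` gives the
non-uniform statement. For a subgroup `K` of index `d`, a conjugacy class of `G` meets at most `d`
conjugacy classes of `K`, and by Schreier's lemma `K` is generated by `K ∩ Σ^(2d+1)`; hence
`c_{K,T}(n) ≤ d · c_{G,Σ}((2d+1) n)` and `C_{G,Σ} ≥ C_{K,T} / (2d+1)`.
-/

open Filter ExpGrowth
open scoped ENNReal

lemma log_div_le_log_of_le_pow {k n N : ℕ} (h : k ≤ N ^ n) : Real.log k / n ≤ Real.log N := by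
  refine div_le_of_le_mul₀ n.cast_nonneg (Real.log_natCast_nonneg N) ?_
  rcases k.eq_zero_or_pos with rfl | hk
  · simpa using mul_nonneg (Real.log_natCast_nonneg N) n.cast_nonneg
  · rw [mul_comm, ← Real.log_pow]
    exact Real.log_le_log (by exact_mod_cast hk) (by exact_mod_cast h)

-- The bound `c n ≤ N ^ n` keeps the real `liminf` away from its junk value, so that it agrees
-- with Mathlib's `expGrowthInf`.
theorem coe_liminf_log_div_eq_expGrowthInf {c : ℕ → ℕ} {N : ℕ} (hc : ∀ n, c n ≠ 0)
    (hN : ∀ n, c n ≤ N ^ n) :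
    ((liminf (fun n ↦ Real.log (c n) / n) atTop : ℝ) : EReal) =
      expGrowthInf (fun n ↦ (c n : ℝ≥0∞)) := by
  rw [Monotone.map_liminf_of_continuousAt EReal.coe_strictMono.monotone _
    continuous_coe_real_ereal.continuousAt
    (isCoboundedUnder_ge_of_le _ fun n ↦ log_div_le_log_of_le_pow (hN n))
    (isBoundedUnder_of ⟨0, fun n ↦ div_nonneg (Real.log_natCast_nonneg _) n.cast_nonneg⟩)]
  refine liminf_congr (Eventually.of_forall fun n ↦ ?_)
  simp [EReal.coe_div, ENNReal.log_pos_real, hc]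

section Generators

variable {G H : Type*} [Group G] [Group H]

lemma Finset.finite_coe_pow (S : Finset G) (n : ℕ) : ((S : Set G) ^ n).Finite := by
  classical
  rw [← Finset.coe_pow]
  exact (S ^ n).finite_toSet

namespace IsSymmGenSet

variable {S : Finset G}

lemma inv_eq (hS : IsSymmGenSet S) : (S : Set G)⁻¹ = S :=
  Set.inv_eq_self_iff_inv_subset.2 fun g hg ↦ by simpa using hS.2.1 _ hg

lemma inv_mem_pow (hS : IsSymmGenSet S) {n : ℕ} {g : G} (hg : g ∈ (S : Set G) ^ n) :
    g⁻¹ ∈ (S : Set G) ^ n := by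
  rw [← hS.inv_eq, inv_pow]
  exact Set.inv_mem_inv.2 hg

lemma image [DecidableEq H] (hS : IsSymmGenSet S) {π : G →* H} (hπ : Function.Surjective π) :
    IsSymmGenSet (S.image π) := by
  refine ⟨?_, ?_, Finset.mem_image.2 ⟨1, hS.2.2, map_one π⟩⟩
  · rw [Finset.coe_image, ← MonoidHom.map_closure, hS.1, ← MonoidHom.range_eq_map,
      MonoidHom.range_eq_top.2 hπ]
  · simp only [Finset.mem_image, forall_exists_index, and_imp, forall_apply_eq_imp_iff₂]
    exact fun a ha ↦ ⟨a⁻¹, hS.2.1 a ha, map_inv π a⟩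

end IsSymmGenSet

lemma exists_isSymmGenSet_superset [Group.FG G] (A : Finset G) :
    ∃ S : Finset G, IsSymmGenSet S ∧ A ⊆ S := by
  classical
  obtain ⟨S₀, hS₀⟩ := ‹Group.FG G›.out
  set B := S₀ ∪ A
  refine ⟨insert 1 (B ∪ B⁻¹), ⟨?_, ?_, Finset.mem_insert_self _ _⟩, ?_⟩
  · refine eq_top_mono (Subgroup.closure_mono ?_) hS₀
    intro g hg
    simp [B, hg]
  · simp only [Finset.mem_insert, Finset.mem_union, Finset.mem_inv']
    rintro g (rfl | hg | hg)
    · simp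
    · simp [hg]
    · simp [hg]
  · intro g hg
    simp [B, hg]

end Generators

section Counting

variable {G H : Type*} [Group G] [Group H]

lemma Set.ncard_le_card_mul_ncard_image {α β γ : Type*} [Finite γ] {f : α → β} (φ : α → γ)
    (hφ : ∀ x y, f x = f y → φ x = φ y → x = y) {s : Set α} (hs : s.Finite) :
    s.ncard ≤ Nat.card γ * (f '' s).ncard := by
  classical
  have := Fintype.ofFinite γ
  obtain ⟨t, rfl⟩ := hs.exists_finset_coe
  rw [← Finset.coe_image, Set.ncard_coe_finset, Set.ncard_coe_finset, Nat.card_eq_fintype_card]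
  refine Finset.card_le_mul_card_image t _ fun b _ ↦ ?_
  refine Finset.card_le_card_of_injOn φ (fun _ _ ↦ Finset.mem_univ _) fun x hx y hy ↦ ?_
  simp only [Finset.coe_filter, Set.mem_ofPred_eq] at hx hy
  exact hφ x y (hx.2.trans hy.2.symm)

lemma ConjClasses.image_mk_image (π : G →* H) (A : Set G) :
    ConjClasses.mk '' (π '' A) = ConjClasses.map π '' (ConjClasses.mk '' A) := by
  simp only [Set.image_image]
  rfl

lemma conjClassCount_eq_ncard_image (A : Set G) :
    conjClassCount A = (ConjClasses.mk '' A).ncard := rfl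

lemma conjClassCount_mono {A B : Set G} (h : A ⊆ B) (hB : B.Finite) :
    conjClassCount A ≤ conjClassCount B :=
  Set.ncard_le_ncard (Set.image_mono h) (hB.image _)

lemma conjClassCount_image_le (π : G →* H) {A : Set G} (hA : A.Finite) :
    conjClassCount (π '' A) ≤ conjClassCount A := by
  rw [conjClassCount_eq_ncard_image, ConjClasses.image_mk_image]
  exact Set.ncard_image_le (hA.image _)

-- `φ x` is the coset of an element conjugating a representative of `x` onto a fixed
-- representative of its `G`-class; two classes of one fiber with equal cosets are `K`-conjugate.
lemma ConjClasses.exists_injective_on_fibers_map_subtype (K : Subgroup G) :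
    ∃ φ : ConjClasses K → G ⧸ K, ∀ x y,
      ConjClasses.map K.subtype x = ConjClasses.map K.subtype y → φ x = φ y → x = y := by
  choose k hk using ConjClasses.exists_rep (α := K)
  choose g hg using ConjClasses.exists_rep (α := G)
  have key (x : ConjClasses K) : ∃ z : G, z * k x * z⁻¹ = g (ConjClasses.map K.subtype x) := by
    rw [← isConj_iff, ← ConjClasses.mk_eq_mk_iff_isConj, hg]
    exact congrArg (ConjClasses.map K.subtype) (hk x)
  choose z hz using key
  refine ⟨fun x ↦ z x, fun x y hxy hzxy ↦ ?_⟩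
  have hu : (z x)⁻¹ * z y ∈ K := QuotientGroup.eq.1 hzxy
  rw [← hk x, ← hk y, ConjClasses.mk_eq_mk_iff_isConj, isConj_comm, isConj_iff]
  refine ⟨⟨_, hu⟩, Subtype.ext ?_⟩
  calc (z x)⁻¹ * z y * k y * ((z x)⁻¹ * z y)⁻¹
      = (z x)⁻¹ * (z y * k y * (z y)⁻¹) * z x := by group
    _ = (z x)⁻¹ * (z x * k x * (z x)⁻¹) * z x := by rw [hz y, ← hxy, hz x]
    _ = k x := by group

lemma conjClassCount_le_index_mul (K : Subgroup G) [K.FiniteIndex] {B : Set K} (hB : B.Finite) :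
    conjClassCount B ≤ K.index * conjClassCount (K.subtype '' B) := by
  obtain ⟨φ, hφ⟩ := ConjClasses.exists_injective_on_fibers_map_subtype K
  rw [conjClassCount_eq_ncard_image, conjClassCount_eq_ncard_image, ConjClasses.image_mk_image,
    Subgroup.index]
  exact Set.ncard_le_card_mul_ncard_image φ hφ (hB.image _)

end Counting

section Growth

variable {G H : Type*} [Group G] [Group H] {S : Finset G}

lemma conjGrowth_ne_zero (hS : (1 : G) ∈ S) (n : ℕ) : conjGrowth S n ≠ 0 :=
  ((Set.ncard_pos ((S.finite_coe_pow n).image _)).2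
    ⟨_, Set.mem_image_of_mem _ (Set.one_mem_pow (Finset.mem_coe.2 hS))⟩).ne'

lemma conjGrowth_le_card_pow (S : Finset G) (n : ℕ) : conjGrowth S n ≤ S.card ^ n := by
  classical
  calc conjGrowth S n ≤ ((S : Set G) ^ n).ncard := Set.ncard_image_le (S.finite_coe_pow n)
    _ = (S ^ n).card := by rw [← Finset.coe_pow, Set.ncard_coe_finset]
    _ ≤ S.card ^ n := Finset.card_pow_le

lemma conjGrowth_monotone (hS : (1 : G) ∈ S) : Monotone (conjGrowth S) := fun _ n hmn ↦
  conjClassCount_mono (Set.pow_subset_pow_right (Finset.mem_coe.2 hS) hmn) (S.finite_coe_pow n)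

lemma conjGrowth_le_of_subset_image (π : G →* H) {T : Finset H} (hTS : (T : Set H) ⊆ π '' S)
    (n : ℕ) : conjGrowth T n ≤ conjGrowth S n := by
  calc conjGrowth T n ≤ conjClassCount (π '' ((S : Set G) ^ n)) := by
        refine conjClassCount_mono ?_ ((S.finite_coe_pow n).image π)
        rw [Set.image_pow]
        exact Set.pow_subset_pow_left hTS
    _ ≤ conjGrowth S n := conjClassCount_image_le π (S.finite_coe_pow n)

lemma conjGrowth_le_index_mul (K : Subgroup G) [K.FiniteIndex] {T : Finset K} {L : ℕ}
    (hTS : K.subtype '' T ⊆ (S : Set G) ^ L) (n : ℕ) :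
    conjGrowth T n ≤ K.index * conjGrowth S (L * n) := by
  calc conjGrowth T n ≤ K.index * conjClassCount (K.subtype '' ((T : Set K) ^ n)) :=
        conjClassCount_le_index_mul K (T.finite_coe_pow n)
    _ ≤ K.index * conjGrowth S (L * n) := by
        refine Nat.mul_le_mul_left _ (conjClassCount_mono ?_ (S.finite_coe_pow _))
        rw [Set.image_pow, pow_mul]
        exact Set.pow_subset_pow_left hTS

lemma coe_conjGrowthRate (hS : (1 : G) ∈ S) :
    (conjGrowthRate S : EReal) = expGrowthInf fun n ↦ (conjGrowth S n : ℝ≥0∞) :=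
  coe_liminf_log_div_eq_expGrowthInf (conjGrowth_ne_zero hS) (conjGrowth_le_card_pow S)

lemma conjGrowthRate_le_mul_of_le_mul {T : Finset H} (hT : (1 : H) ∈ T) (hS : (1 : G) ∈ S)
    {d L : ℕ} (hL : L ≠ 0) (h : ∀ n, conjGrowth T n ≤ d * conjGrowth S (L * n)) :
    conjGrowthRate T ≤ L * conjGrowthRate S := by
  have hmono : Monotone fun n ↦ (conjGrowth S n : ℝ≥0∞) :=
    fun _ _ hmn ↦ Nat.mono_cast (conjGrowth_monotone hS hmn)
  rw [← EReal.coe_le_coe_iff, EReal.coe_mul, EReal.coe_coe_eq_natCast, coe_conjGrowthRate hT,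
    coe_conjGrowthRate hS, ← hmono.expGrowthInf_comp_mul hL]
  exact expGrowthInf_le_of_eventually_le (ENNReal.natCast_ne_top d)
    (Eventually.of_forall fun n ↦ by exact_mod_cast h n)

lemma conjGrowthRate_le_of_le {T : Finset H} (hT : (1 : H) ∈ T) (hS : (1 : G) ∈ S)
    (h : ∀ n, conjGrowth T n ≤ conjGrowth S n) : conjGrowthRate T ≤ conjGrowthRate S := by
  simpa using conjGrowthRate_le_mul_of_le_mul hT hS one_ne_zero (d := 1) (by simpa using h)

end Growth

section Schreier

variable {G : Type*} [Group G] (K : Subgroup G)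

instance Subgroup.finite_quotient_rightRel [K.FiniteIndex] :
    Finite (Quotient (QuotientGroup.rightRel K)) :=
  Finite.of_equiv _ (QuotientGroup.quotientRightRelEquivQuotientLeftRel K).symm

lemma Subgroup.natCard_quotient_rightRel :
    Nat.card (Quotient (QuotientGroup.rightRel K)) = K.index :=
  (Nat.card_congr (QuotientGroup.quotientRightRelEquivQuotientLeftRel K)).trans
    K.index_eq_card.symm

local notation "mk" => Quotient.mk (QuotientGroup.rightRel K)

lemma image_mk_mul_subset_image_mk_mul {A B : Set G} (S : Set G) (h : mk '' A ⊆ mk '' B) :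
    mk '' (A * S) ⊆ mk '' (B * S) := by
  rintro _ ⟨_, ⟨a, ha, s, hs, rfl⟩, rfl⟩
  obtain ⟨b, hb, hba⟩ := h ⟨a, ha, rfl⟩
  refine ⟨b * s, Set.mul_mem_mul hb hs, ?_⟩
  rw [Quotient.eq, QuotientGroup.rightRel_apply] at hba ⊢
  convert hba using 1
  group

-- The number of right cosets met by `S ^ j` grows strictly until it stabilises, and it is at most
-- `K.index`.
lemma image_mk_pow_index_succ [K.FiniteIndex] {S : Set G} (hS : (1 : G) ∈ S) :
    mk '' (S ^ (K.index + 1)) = mk '' (S ^ K.index) := by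
  have hmono : Monotone fun j ↦ mk '' (S ^ j) :=
    fun _ _ hij ↦ Set.image_mono (Set.pow_subset_pow_right hS hij)
  have heq {i j : ℕ} (hij : i ≤ j) (h : (mk '' (S ^ j)).ncard ≤ (mk '' (S ^ i)).ncard) :
      mk '' (S ^ i) = mk '' (S ^ j) :=
    Set.eq_of_subset_of_ncard_le (hmono hij) h
  have hstab (j : ℕ) (h : (mk '' (S ^ j)).ncard = (mk '' (S ^ (j + 1))).ncard) :
      (mk '' (S ^ (j + 1))).ncard = (mk '' (S ^ (j + 2))).ncard := by
    refine congrArg Set.ncard (subset_antisymm (hmono (Nat.le_succ _)) ?_)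
    rw [pow_succ S (j + 1), pow_succ S j]
    exact image_mk_mul_subset_image_mk_mul K S (heq (Nat.le_succ j) h.ge).ge
  have hcard : (mk '' (S ^ (K.index + 1))).ncard = (mk '' (S ^ K.index)).ncard :=
    Nat.stabilises_of_monotone (fun _ _ hij ↦ Set.ncard_le_ncard (hmono hij))
      (fun _ ↦ (Set.ncard_le_card _).trans_eq K.natCard_quotient_rightRel) hstab (Nat.le_succ _)
  exact (heq (Nat.le_succ _) hcard.le).symm

lemma exists_mem_pow_index_mk_eq [K.FiniteIndex] {S : Finset G} (hS : IsSymmGenSet S)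
    (q : Quotient (QuotientGroup.rightRel K)) : ∃ t ∈ (S : Set G) ^ K.index, mk t = q := by
  obtain ⟨g, rfl⟩ := Quotient.mk_surjective q
  have hstep (x s : G) (hs : s ∈ S) (hx : mk x ∈ mk '' ((S : Set G) ^ K.index)) :
      mk (x * s) ∈ mk '' ((S : Set G) ^ K.index) := by
    rw [← image_mk_pow_index_succ K (Finset.mem_coe.2 hS.2.2), pow_succ]
    exact image_mk_mul_subset_image_mk_mul K (A := {x}) _
      (by rwa [Set.image_singleton, Set.singleton_subset_iff])
      ⟨x * s, Set.mul_mem_mul (Set.mem_singleton x) hs, rfl⟩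
  refine Subgroup.closure_induction_right (p := fun x _ ↦ mk x ∈ mk '' ((S : Set G) ^ K.index))
    ⟨1, Set.one_mem_pow (Finset.mem_coe.2 hS.2.2), rfl⟩ (fun x _ s hs hx ↦ hstep x s hs hx)
    (fun x _ s hs hx ↦ hstep x s⁻¹ (hS.2.1 s hs) hx) (hS.1.symm ▸ Subgroup.mem_top g)

lemma exists_isComplement_right_subset_pow_index [K.FiniteIndex] {S : Finset G}
    (hS : IsSymmGenSet S) :
    ∃ R : Set G, Subgroup.IsComplement K R ∧ (1 : G) ∈ R ∧ R ⊆ (S : Set G) ^ K.index := by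
  classical
  choose r hrS hr using exists_mem_pow_index_mk_eq K hS
  refine ⟨Set.range (Function.update r (mk 1) 1), Subgroup.isComplement_range_right fun q ↦ ?_,
    ⟨mk 1, Function.update_self _ _ _⟩, ?_⟩
  · rcases eq_or_ne q (mk 1) with rfl | hq
    · rw [Function.update_self]
    · rw [Function.update_of_ne hq]
      exact hr q
  · rintro _ ⟨q, rfl⟩
    rcases eq_or_ne q (mk 1) with rfl | hq
    · rw [Function.update_self]
      exact Set.one_mem_pow (Finset.mem_coe.2 hS.2.2)
    · rw [Function.update_of_ne hq]
      exact hrS q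

-- The Schreier generators `r * s * r'⁻¹`, for `r, r'` in a transversal inside `S ^ K.index`,
-- lie in `S ^ (2 * K.index + 1)`.
lemma closure_inter_pow_eq [K.FiniteIndex] {S : Finset G} (hS : IsSymmGenSet S) :
    Subgroup.closure ((K : Set G) ∩ (S : Set G) ^ (2 * K.index + 1)) = K := by
  obtain ⟨R, hR, hR1, hRS⟩ := exists_isComplement_right_subset_pow_index K hS
  refine le_antisymm ((Subgroup.closure_le K).2 Set.inter_subset_left) ?_
  calc K = Subgroup.closure ((fun g ↦ g * (hR.toRightFun g : G)⁻¹) '' (R * S)) :=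
        (Subgroup.closure_mul_image_eq hR hR1 hS.1).symm
    _ ≤ _ := Subgroup.closure_mono ?_
  rintro _ ⟨_, ⟨r, hr, s, hs, rfl⟩, rfl⟩
  refine ⟨hR.mul_inv_toRightFun_mem _, ?_⟩
  rw [show 2 * K.index + 1 = K.index + 1 + K.index by omega, pow_add, pow_succ]
  exact Set.mul_mem_mul (Set.mul_mem_mul (hRS hr) hs) (hS.inv_mem_pow (hRS (Subtype.mem _)))

lemma exists_isSymmGenSet_subgroup [K.FiniteIndex] {S : Finset G} (hS : IsSymmGenSet S) :
    ∃ T : Finset K, IsSymmGenSet T ∧ K.subtype '' T ⊆ (S : Set G) ^ (2 * K.index + 1) := by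
  classical
  set T := (S ^ (2 * K.index + 1)).subtype (· ∈ K)
  have hT : K.subtype '' T = (K : Set G) ∩ (S : Set G) ^ (2 * K.index + 1) := by
    ext g
    simp [T, ← Finset.coe_pow, and_comm]
  refine ⟨T, ⟨?_, ?_, ?_⟩, hT.trans_subset Set.inter_subset_right⟩
  · apply Subgroup.map_injective K.subtype_injective
    rw [MonoidHom.map_closure, hT, closure_inter_pow_eq K hS, ← MonoidHom.range_eq_map,
      K.range_subtype]
  · intro k hk
    rw [Finset.mem_subtype, ← Finset.mem_coe, Finset.coe_pow] at hk ⊢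
    exact hS.inv_mem_pow hk
  · rw [Finset.mem_subtype, ← Finset.mem_coe, Finset.coe_pow]
    exact Set.one_mem_pow (Finset.mem_coe.2 hS.2.2)

end Schreier

section Transfer

variable {G H : Type*} [Group G] [Group H]

theorem HasExpConjGrowth.of_surjective [Group.FG G] {π : G →* H} (hπ : Function.Surjective π)
    (h : HasExpConjGrowth H) : HasExpConjGrowth G := by
  classical
  obtain ⟨T, hT, hT_pos⟩ := h
  obtain ⟨S, hS, hTS⟩ := exists_isSymmGenSet_superset (T.image (Function.surjInv hπ))
  refine ⟨S, hS, hT_pos.trans_le (conjGrowthRate_le_of_le hT.2.2 hS.2.2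
    (conjGrowth_le_of_subset_image π fun t ht ↦ ?_))⟩
  exact ⟨_, hTS (Finset.mem_image_of_mem _ ht), Function.surjInv_eq hπ t⟩

theorem HasUnifExpConjGrowth.of_surjective {π : G →* H} (hπ : Function.Surjective π)
    (h : HasUnifExpConjGrowth H) : HasUnifExpConjGrowth G := by
  classical
  obtain ⟨ε, hε, hH⟩ := h
  refine ⟨ε, hε, fun S hS ↦ (hH _ (hS.image hπ)).trans ?_⟩
  exact conjGrowthRate_le_of_le (hS.image hπ).2.2 hS.2.2
    (conjGrowth_le_of_subset_image π (Finset.coe_image).le)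

theorem HasExpConjGrowth.of_finiteIndex [Group.FG G] (K : Subgroup G) [K.FiniteIndex]
    (h : HasExpConjGrowth K) : HasExpConjGrowth G := by
  classical
  obtain ⟨T, hT, hT_pos⟩ := h
  obtain ⟨S, hS, hTS⟩ := exists_isSymmGenSet_superset (T.image K.subtype)
  have hTS' : K.subtype '' T ⊆ (S : Set G) ^ 1 := by
    rw [pow_one, ← Finset.coe_image]
    exact_mod_cast hTS
  refine ⟨S, hS, hT_pos.trans_le ?_⟩
  simpa using conjGrowthRate_le_mul_of_le_mul hT.2.2 hS.2.2 one_ne_zero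
    (conjGrowth_le_index_mul K hTS')

theorem HasUnifExpConjGrowth.of_finiteIndex (K : Subgroup G) [K.FiniteIndex]
    (h : HasUnifExpConjGrowth K) : HasUnifExpConjGrowth G := by
  obtain ⟨ε, hε, hK⟩ := h
  refine ⟨ε / (2 * K.index + 1 : ℕ), by positivity, fun S hS ↦ ?_⟩
  obtain ⟨T, hT, hTS⟩ := exists_isSymmGenSet_subgroup K hS
  rw [div_le_iff₀' (by positivity)]
  exact (hK T hT).trans (conjGrowthRate_le_mul_of_le_mul hT.2.2 hS.2.2 (by omega)
    (conjGrowth_le_index_mul K hTS))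

end Transfer

/-- Exponential (resp. uniform exponential) conjugacy growth passes from a quotient or a
finite index subgroup to the ambient finitely generated group. -/
theorem expConjGrowth_of_quotient_or_finiteIndexSubgroup {G H : Type*} [Group G] [Group H]
    [Group.FG G]
    (hGH : (∃ π : G →* H, Function.Surjective π) ∨
      (∃ K : Subgroup G, K.FiniteIndex ∧ Nonempty (H ≃* K))) :
    (HasExpConjGrowth H → HasExpConjGrowth G) ∧
    (HasUnifExpConjGrowth H → HasUnifExpConjGrowth G) := by
  rcases hGH with ⟨π, hπ⟩ | ⟨K, hK, ⟨e⟩⟩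
  · exact ⟨.of_surjective hπ, .of_surjective hπ⟩
  · have hπ : Function.Surjective e.symm.toMonoidHom := e.symm.surjective
    exact ⟨fun h ↦ .of_finiteIndex K (.of_surjective hπ h),
      fun h ↦ .of_finiteIndex K (.of_surjective hπ h)⟩
end

section
/- Let K be a field and let Γ be a subgroup of Aff(K). Then Γ is virtually nilpotent if and only if the image of Γ under the projection Aff(K) → K^× is finite, or the intersection of Γ with the translation subgroup K is trivial. -/
open scoped Pointwise

/-- The affine group of the line over `K`: pairs `(b, a)` representing `x ↦ a x + b`. -/
def Aff (K : Type*) [Field K] : Type _ := K × Kˣ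

namespace Aff

variable {K : Type*} [Field K]

instance instGroup : Group (Aff K) where
  mul := fun p q : K × Kˣ => ((p.1 + (p.2 : K) * q.1, p.2 * q.2) : K × Kˣ)
  one := ((0, 1) : K × Kˣ)
  inv := fun p : K × Kˣ => ((((p.2⁻¹ : Kˣ) : K) * (-p.1), p.2⁻¹) : K × Kˣ)
  mul_assoc := by
    rintro ⟨b1, a1⟩ ⟨b2, a2⟩ ⟨b3, a3⟩
    refine Prod.ext ?_ ?_
    · show (b1 + (a1 : K) * b2) + ((a1 * a2 : Kˣ) : K) * b3
        = b1 + (a1 : K) * (b2 + (a2 : K) * b3)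
      push_cast; ring
    · show a1 * a2 * a3 = a1 * (a2 * a3)
      exact mul_assoc _ _ _
  one_mul := by
    rintro ⟨b, a⟩
    refine Prod.ext ?_ ?_
    · show (0 : K) + ((1 : Kˣ) : K) * b = b
      simp
    · show (1 : Kˣ) * a = a
      simp
  mul_one := by
    rintro ⟨b, a⟩
    refine Prod.ext ?_ ?_
    · show b + (a : K) * 0 = b
      simp
    · show a * 1 = a
      simp
  inv_mul_cancel := by
    rintro ⟨b, a⟩
    refine Prod.ext ?_ ?_
    · show ((a⁻¹ : Kˣ) : K) * (-b) + ((a⁻¹ : Kˣ) : K) * b = 0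
      ring
    · show a⁻¹ * a = 1
      simp

/-- The affine map `u(a,b) : x ↦ a x + b`. -/
def u (a : Kˣ) (b : K) : Aff K := ((b, a) : K × Kˣ)

/-- The projection `Aff(K) → K^×` onto the linear part. -/
def toUnitsHom (K : Type*) [Field K] : Aff K →* Kˣ where
  toFun p := (p : K × Kˣ).2
  map_one' := rfl
  map_mul' _ _ := rfl

/-- An element of `Aff K` is unipotent when its linear part is trivial. -/
def IsUnipotent (p : Aff K) : Prop := toUnitsHom K p = 1

end Aff

/-- A group is virtually nilpotent if it has a nilpotent subgroup of finite index. -/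
def VirtuallyNilpotent (G : Type*) [Group G] : Prop :=
  ∃ H : Subgroup G, H.FiniteIndex ∧ Group.IsNilpotent H

/-- A group is virtually solvable if it has a solvable subgroup of finite index. -/
def VirtuallySolvable (G : Type*) [Group G] : Prop :=
  ∃ H : Subgroup G, H.FiniteIndex ∧ IsSolvable H

/-- A global field is a finite extension of `ℚ` or of `𝔽_p(t)` for a prime `p`. -/
def IsGlobalField (K : Type*) [Field K] : Prop :=
  (∃ _ : CharZero K, FiniteDimensional ℚ K) ∨
  (∃ (p : ℕ) (_ : Fact p.Prime) (_ : Algebra (RatFunc (ZMod p)) K),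
    FiniteDimensional (RatFunc (ZMod p)) K)

/-!
Write `T` for the translation subgroup. If `Γ` has finite image in `Kˣ`, then `Γ ⊓ T` is an
abelian subgroup of finite index; if `Γ ⊓ T = ⊥`, then `Γ` embeds in the abelian group `Kˣ`.

Conversely, the iterated commutators of a translation `u 1 c` with `u a b` are
`u 1 ((1 - a) ^ n * c)`, so a nilpotent subgroup of `Aff K` containing a nontrivial
translation consists of translations. Conjugating `u 1 c ∈ Γ` (with `c ≠ 0`) by `Γ` gives
`u 1 (a * c)` for every `a` in the image of `Γ`; if that image is infinite, so is `Γ ⊓ T`,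
and a nilpotent subgroup `H` of finite index in `Γ` meets `T` nontrivially. Then `H ≤ T`,
so `T` has finite index in `Γ`, i.e. the image of `Γ` is finite after all.
-/

open scoped commutatorElement

namespace Subgroup

variable {G : Type*} [Group G]

theorem iterate_commutator_mem_lowerCentralSeries (S : Subgroup G) {g x : G} (hg : g ∈ S)
    (hx : x ∈ S) (n : ℕ) : (⁅·, g⁆)^[n] x ∈ S.lowerCentralSeries n := by
  induction n with
  | zero => exact hx
  | succ n ih =>
    rw [Function.iterate_succ_apply']
    exact commutator_mem_commutator ih hg

theorem exists_iterate_commutator_eq_one (S : Subgroup G) [Group.IsNilpotent S] {g x : G}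
    (hg : g ∈ S) (hx : x ∈ S) : ∃ n, (⁅·, g⁆)^[n] x = 1 := by
  obtain ⟨n, hn⟩ := (isNilpotent_iff_lowerCentralSeries S).mp ‹_›
  refine ⟨n, ?_⟩
  simpa [hn] using S.iterate_commutator_mem_lowerCentralSeries hg hx n

theorem inf_ne_bot_of_relIndex_ne_zero {H K : Subgroup G} (h : H.relIndex K ≠ 0)
    (hK : (K : Set G).Infinite) : H ⊓ K ≠ ⊥ := by
  intro hbot
  rw [← inf_relIndex_right, hbot, relIndex_bot_left] at h
  have : Infinite K := Set.infinite_coe_iff.mpr hK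
  exact h Nat.card_eq_zero_of_infinite

theorem relIndex_ker_ne_zero_iff {G' : Type*} [Group G'] (f : G →* G') (K : Subgroup G) :
    f.ker.relIndex K ≠ 0 ↔ (K.map f : Set G').Finite := by
  rw [relIndex_ker, Nat.card_ne_zero]
  exact ⟨fun ⟨_, h⟩ => Set.toFinite _, fun h => ⟨⟨1, one_mem _⟩, h⟩⟩

end Subgroup

theorem VirtuallyNilpotent.exists_relIndex_ne_zero {G : Type*} [Group G] {Γ : Subgroup G}
    (hΓ : VirtuallyNilpotent Γ) :
    ∃ H : Subgroup G, H.relIndex Γ ≠ 0 ∧ Group.IsNilpotent H := by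
  obtain ⟨H, hH, hHnil⟩ := hΓ
  refine ⟨H.map Γ.subtype, ?_, ?_⟩
  · rw [Subgroup.relIndex, show (H.map Γ.subtype).subgroupOf Γ = H from
      Subgroup.comap_map_eq_self_of_injective Γ.subtype_injective H]
    exact hH.index_ne_zero
  · exact (Group.isNilpotent_congr (H.equivMapOfInjective _ Γ.subtype_injective)).mp hHnil

namespace Aff

variable {K : Type*} [Field K]

lemma exists_eq_u (p : Aff K) : ∃ a b, p = u a b := ⟨_, _, rfl⟩

@[simp]
lemma toUnitsHom_u (a : Kˣ) (b : K) : toUnitsHom K (u a b) = a := rfl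

lemma u_mul_u (a a' : Kˣ) (b b' : K) : u a b * u a' b' = u (a * a') (b + a * b') := rfl

lemma inv_u (a : Kˣ) (b : K) : (u a b)⁻¹ = u a⁻¹ (-(a⁻¹ * b)) := by
  show u a⁻¹ (((a⁻¹ : Kˣ) : K) * (-b)) = _
  congr 1
  ring

lemma u_one_zero : u (1 : Kˣ) 0 = 1 := rfl

lemma u_inj {a a' : Kˣ} {b b' : K} : u a b = u a' b' ↔ a = a' ∧ b = b' := by
  show ((b, a) : K × Kˣ) = (b', a') ↔ _
  rw [Prod.ext_iff]
  exact and_comm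

lemma u_one_eq_one_iff {b : K} : u 1 b = 1 ↔ b = 0 := by
  rw [← u_one_zero, u_inj]
  simp

lemma mem_ker_toUnitsHom {p : Aff K} : p ∈ (toUnitsHom K).ker ↔ ∃ b, p = u 1 b := by
  obtain ⟨a, b, rfl⟩ := exists_eq_u p
  simp [u_inj]

instance : IsMulCommutative (toUnitsHom K).ker := by
  refine ⟨⟨fun ⟨p, hp⟩ ⟨q, hq⟩ => ?_⟩⟩
  obtain ⟨b, rfl⟩ := mem_ker_toUnitsHom.mp hp
  obtain ⟨c, rfl⟩ := mem_ker_toUnitsHom.mp hq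
  refine Subtype.ext ?_
  simp only [Subgroup.coe_mul, u_mul_u, u_inj]
  constructor <;> simp [add_comm]

lemma conj_u_one (a : Kˣ) (b c : K) : u a b * u 1 c * (u a b)⁻¹ = u 1 (a * c) := by
  rw [inv_u, u_mul_u, u_mul_u, u_inj]
  constructor
  · group
  · push_cast
    field_simp
    ring

lemma commutatorElement_u_one_u (a : Kˣ) (b c : K) : ⁅u 1 c, u a b⁆ = u 1 ((1 - a) * c) := by
  rw [commutatorElement_def, inv_u, inv_u, u_mul_u, u_mul_u, u_mul_u, u_inj]
  constructor
  · group
  · push_cast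
    field_simp
    ring

lemma iterate_commutatorElement_u (a : Kˣ) (b c : K) (n : ℕ) :
    (⁅·, u a b⁆)^[n] (u 1 c) = u 1 ((1 - a) ^ n * c) := by
  induction n with
  | zero => simp
  | succ n ih =>
    rw [Function.iterate_succ_apply', ih, commutatorElement_u_one_u]
    congr 1
    ring

lemma exists_u_one_mem_of_inf_ker_ne_bot {H : Subgroup (Aff K)}
    (hH : H ⊓ (toUnitsHom K).ker ≠ ⊥) : ∃ c ≠ 0, u 1 c ∈ H := by
  obtain ⟨t, ⟨htH, htT⟩, ht1⟩ : ∃ t ∈ H ⊓ (toUnitsHom K).ker, t ≠ 1 := by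
    by_contra! h
    exact hH ((Subgroup.eq_bot_iff_forall _).mpr h)
  obtain ⟨c, rfl⟩ := mem_ker_toUnitsHom.mp htT
  exact ⟨c, mt u_one_eq_one_iff.mpr ht1, htH⟩

theorem le_ker_of_isNilpotent (H : Subgroup (Aff K)) [Group.IsNilpotent H]
    (hH : H ⊓ (toUnitsHom K).ker ≠ ⊥) : H ≤ (toUnitsHom K).ker := by
  obtain ⟨c, hc, hcH⟩ := exists_u_one_mem_of_inf_ker_ne_bot hH
  intro g hg
  obtain ⟨a, b, rfl⟩ := exists_eq_u g
  obtain ⟨n, hn⟩ := H.exists_iterate_commutator_eq_one hg hcH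
  rw [iterate_commutatorElement_u, u_one_eq_one_iff, mul_eq_zero, or_iff_left hc] at hn
  rw [MonoidHom.mem_ker, toUnitsHom_u, Units.ext_iff, Units.val_one, ← sub_eq_zero,
    ← neg_eq_zero, neg_sub]
  exact eq_zero_of_pow_eq_zero hn

theorem infinite_inf_ker {Γ : Subgroup (Aff K)}
    (hΓ : (Γ.map (toUnitsHom K) : Set Kˣ).Infinite) (hT : Γ ⊓ (toUnitsHom K).ker ≠ ⊥) :
    ((Γ ⊓ (toUnitsHom K).ker : Subgroup (Aff K)) : Set (Aff K)).Infinite := by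
  obtain ⟨c, hc, hcΓ⟩ := exists_u_one_mem_of_inf_ker_ne_bot hT
  refine Set.infinite_of_injOn_mapsTo (f := fun a : Kˣ => u 1 (a * c)) ?_ ?_ hΓ
  · intro a _ a' _ h
    simpa [u_inj, hc, Units.ext_iff] using h
  · rintro _ ⟨g, hg, rfl⟩
    obtain ⟨a, b, rfl⟩ := exists_eq_u g
    refine ⟨?_, mem_ker_toUnitsHom.mpr ⟨_, rfl⟩⟩
    change u 1 (a * c) ∈ Γ
    rw [← conj_u_one a b]
    exact Γ.mul_mem (Γ.mul_mem hg hcΓ) (Γ.inv_mem hg)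

end Aff

/-- A subgroup of `Aff(K)` is virtually nilpotent iff its image in `K^×` is finite or it
meets the translation subgroup (the kernel of the projection to `K^×`) trivially. -/
theorem virtuallyNilpotent_iff_aff {K : Type*} [Field K] (Γ : Subgroup (Aff K)) :
    VirtuallyNilpotent Γ ↔
      (↑(Γ.map (Aff.toUnitsHom K)) : Set Kˣ).Finite ∨
        Γ ⊓ (Aff.toUnitsHom K).ker = ⊥ := by
  set T := (Aff.toUnitsHom K).ker
  constructor
  · intro hΓ
    obtain ⟨H, hH, hHnil⟩ := hΓ.exists_relIndex_ne_zero
    refine or_iff_not_imp_right.mpr fun hT => by_contra fun hinf => ?_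
    have hH' : H.relIndex (Γ ⊓ T) ≠ 0 :=
      mt (Subgroup.relIndex_eq_zero_of_le_right inf_le_left) hH
    have hHT : H ⊓ T ≠ ⊥ :=
      ne_bot_of_le_ne_bot
        (Subgroup.inf_ne_bot_of_relIndex_ne_zero hH' (Aff.infinite_inf_ker hinf hT))
        (inf_le_inf_left _ inf_le_right)
    exact hinf ((Subgroup.relIndex_ker_ne_zero_iff _ Γ).mp
      (mt (Subgroup.relIndex_eq_zero_of_le_left (Aff.le_ker_of_isNilpotent H hHT)) hH))
  · rintro (hfinite | hT)
    · exact ⟨T.subgroupOf Γ, ⟨(Subgroup.relIndex_ker_ne_zero_iff _ Γ).mpr hfinite⟩,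
        open IsMulCommutative in inferInstance⟩
    · have hker : ((Aff.toUnitsHom K).domRestrict Γ).ker = ⊥ :=
        (MonoidHom.ker_domRestrict _ _).trans
          (Subgroup.subgroupOf_eq_bot.mpr (disjoint_iff.mpr (inf_comm Γ T ▸ hT)))
      have : Group.IsNilpotent Γ := Subgroup.isNilpotent_of_ker_le_center _ (hker ▸ bot_le)
      exact ⟨⊤, inferInstance, inferInstance⟩
end

section
/- Let K be an infinite field with algebraic closure K̂, and let A be a finitely generated commutative K-algebra which is an integral domain. Suppose A is integral over a polynomial subring B = K[t_1,…,t_d] in d algebraically independent elements, and let u ∈ A be a nonzero element satisfying a monic polynomial of degree ≤ k with coefficients in B. Then there exists a K-algebra homomorphism φ : A → K̂ such that φ(B) ⊆ K and φ(u) ≠ 0; in particular, for every a ∈ A whose minimal monic polynomial over B has degree k, the element φ(a) has degree ≤ k over K. -/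
/-!
Since `A` is integral over `B` and `u ≠ 0`, the ideal `u A` meets `B` in a nonzero `b`; as `K` is
infinite, `b` does not vanish at some point `x ∈ Kᵈ`. By lying over, the maximal ideal of `x` in
`B` is the contraction of a prime `Q` of `A`, and `A ⧸ Q` is integral over `B ⧸ (Q ∩ B) = K`, so it
embeds into `K̂`. The composite `φ` sends `B` to `K`, and `φ u ≠ 0` because `φ u ∣ φ b = b(x) ≠ 0`.
A monic equation of degree `m` over `B` is sent to one over `K`, which bounds the degree over `K`.
-/

open Polynomial

section Lifting

variable {R A : Type*} [CommRing R] [CommRing A] (f : R →+* A)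

theorem exists_monic_natDegree_eq_eval₂_eq_zero {q : A[X]} (hq : q.Monic)
    (hc : ∀ i, q.coeff i ∈ Set.range f) {a : A} (ha : q.eval a = 0) :
    ∃ P : R[X], P.Monic ∧ P.natDegree = q.natDegree ∧ P.eval₂ f a = 0 := by
  obtain ⟨P, hPq, hPdeg, hPm⟩ :=
    lifts_and_natDegree_eq_and_monic ((lifts_iff_coeff_lifts q).mpr hc) hq
  exact ⟨P, hPm, hPdeg, by rw [← eval_map, hPq, ha]⟩

theorem exists_ne_zero_dvd_of_isIntegralElem [Nontrivial R] [IsDomain A] {u : A} (hu : u ≠ 0)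
    (hint : f.IsIntegralElem u) : ∃ r : R, r ≠ 0 ∧ u ∣ f r := by
  let := f.toAlgebra
  obtain ⟨r, hr, hr0⟩ := Submodule.exists_mem_ne_zero_of_ne_bot
    (Ideal.comap_ne_bot_of_integral_mem hu (Ideal.mem_span_singleton_self u) hint)
  exact ⟨r, hr0, Ideal.mem_span_singleton.mp hr⟩

end Lifting

section Specialization

variable {K R A L : Type*} [CommSemiring K] [CommSemiring R] [CommSemiring A] [CommSemiring L]
  [Algebra K R] [Algebra K A] [Algebra K L]

theorem aeval_map_eq_zero_of_comp_eq {ι : R →ₐ[K] A} {φ : A →ₐ[K] L} {σ : R →ₐ[K] K}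
    (h : φ.comp ι = (Algebra.ofId K L).comp σ) {P : R[X]} {a : A} (ha : P.eval₂ ι a = 0) :
    aeval (φ a) (P.map (σ : R →+* K)) = 0 := by
  have h' : (φ : A →+* L).comp (ι : R →+* A) = (algebraMap K L).comp (σ : R →+* K) :=
    RingHom.ext fun r => DFunLike.congr_fun h r
  rw [aeval_def, eval₂_map, ← h', ← RingHom.coe_coe φ, ← hom_eval₂, ha, map_zero]

end Specialization

theorem natDegree_minpoly_le_of_comp_eq {K R A L : Type*} [CommRing K] [CommSemiring R]
    [CommSemiring A] [CommRing L] [Algebra K R] [Algebra K A] [Algebra K L]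
    {ι : R →ₐ[K] A} {φ : A →ₐ[K] L} {σ : R →ₐ[K] K}
    (h : φ.comp ι = (Algebra.ofId K L).comp σ) {P : R[X]} (hP : P.Monic) {a : A}
    (ha : P.eval₂ ι a = 0) : (minpoly K (φ a)).natDegree ≤ P.natDegree := by
  have hmin := minpoly.min K (φ a) (hP.map _) (aeval_map_eq_zero_of_comp_eq h ha)
  exact (natDegree_le_natDegree hmin).trans natDegree_map_le

section LyingOver

variable {K R A : Type*} [Field K] [CommRing R] [CommRing A] [Algebra K R] [Algebra K A]

theorem exists_isPrime_mkₐ_comp_eq (ι : R →ₐ[K] A) (hinj : Function.Injective ι)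
    (hint : (ι : R →+* A).IsIntegral) (σ : R →ₐ[K] K) :
    ∃ Q : Ideal A, Q.IsPrime ∧
      (Ideal.Quotient.mkₐ K Q).comp ι = (Algebra.ofId K (A ⧸ Q)).comp σ := by
  let := (ι : R →+* A).toAlgebra
  have : Algebra.IsIntegral R A := ⟨hint⟩
  have : (RingHom.ker σ).IsPrime := RingHom.ker_isPrime σ
  obtain ⟨Q, -, hQ, hQσ⟩ := Ideal.exists_ideal_over_prime_of_isIntegral (S := A)
    (RingHom.ker σ) ⊥ fun r hr => by
      rw [hinj (Ideal.mem_bot.mp hr |>.trans (map_zero ι).symm)]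
      exact zero_mem _
  refine ⟨Q, hQ, AlgHom.ext fun r => ?_⟩
  have hr : r - algebraMap K R (σ r) ∈ Q.comap (algebraMap R A) := by
    rw [hQσ, RingHom.mem_ker, map_sub, AlgHom.commutes, Algebra.algebraMap_self,
      RingHom.id_apply, sub_self]
  rw [Ideal.mem_comap, map_sub] at hr
  change ι r - ι (algebraMap K R (σ r)) ∈ Q at hr
  rw [ι.commutes, ← Ideal.Quotient.mk_eq_mk_iff_sub_mem] at hr
  simpa using hr

theorem exists_algHom_comp_eq_of_isIntegral (L : Type*) [Field L] [IsAlgClosed L] [Algebra K L]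
    (ι : R →ₐ[K] A) (hinj : Function.Injective ι) (hint : (ι : R →+* A).IsIntegral)
    (σ : R →ₐ[K] K) : ∃ φ : A →ₐ[K] L, φ.comp ι = (Algebra.ofId K L).comp σ := by
  obtain ⟨Q, hQ, hQσ⟩ := exists_isPrime_mkₐ_comp_eq ι hinj hint σ
  have : Algebra.IsIntegral K (A ⧸ Q) := ⟨fun y => by
    obtain ⟨a, rfl⟩ := Ideal.Quotient.mk_surjective y
    obtain ⟨P, hPm, hPa⟩ := hint a
    exact ⟨_, hPm.map _, aeval_map_eq_zero_of_comp_eq hQσ hPa⟩⟩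
  refine ⟨IsAlgClosed.lift.comp (Ideal.Quotient.mkₐ K Q), ?_⟩
  rw [AlgHom.comp_assoc, hQσ, ← AlgHom.comp_assoc]
  exact congrArg (AlgHom.comp · σ) (Subsingleton.elim _ _)

end LyingOver

theorem specialization_of_integral_over_polynomials_general
    {K : Type*} [Field K] [Infinite K]
    {A : Type*} [CommRing A] [IsDomain A] [Algebra K A]
    (d : ℕ) (ι : MvPolynomial (Fin d) K →ₐ[K] A) (hinj : Function.Injective ι)
    (hint : ∀ a : A, ∃ p : Polynomial A,
      p.Monic ∧ (∀ i, p.coeff i ∈ ι.range) ∧ p.eval a = 0)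
    (u : A) (hu : u ≠ 0) :
    ∃ φ : A →ₐ[K] AlgebraicClosure K,
      (∀ b ∈ ι.range, ∃ c : K, φ b = algebraMap K (AlgebraicClosure K) c) ∧
      φ u ≠ 0 ∧
      ∀ (a : A) (m : ℕ),
        (∃ p : Polynomial A,
          p.Monic ∧ p.natDegree ≤ m ∧ (∀ i, p.coeff i ∈ ι.range) ∧ p.eval a = 0) →
        (minpoly K (φ a)).natDegree ≤ m := by
  have hintι : (ι : MvPolynomial (Fin d) K →+* A).IsIntegral := fun a => by
    obtain ⟨p, hpm, hpc, hpa⟩ := hint a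
    obtain ⟨P, hPm, -, hPa⟩ := exists_monic_natDegree_eq_eval₂_eq_zero _ hpm hpc hpa
    exact ⟨P, hPm, hPa⟩
  obtain ⟨b, hb, hub⟩ := exists_ne_zero_dvd_of_isIntegralElem _ hu (hintι u)
  obtain ⟨x, hx⟩ : ∃ x, MvPolynomial.eval x b ≠ 0 := by
    by_contra! h
    exact hb (MvPolynomial.funext fun x => by rw [h x, map_zero])
  obtain ⟨φ, hφ⟩ := exists_algHom_comp_eq_of_isIntegral (AlgebraicClosure K) ι hinj hintι
    (MvPolynomial.aeval x)
  have hφι (r) : φ (ι r) = algebraMap K _ (MvPolynomial.eval x r) := by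
    simpa using DFunLike.congr_fun hφ r
  refine ⟨φ, fun _ ⟨r, hr⟩ => ⟨_, hr ▸ hφι r⟩, fun hφu => hx ?_, ?_⟩
  · simpa [hφu, hφι] using map_dvd φ hub
  · rintro a m ⟨p, hpm, hpdeg, hpc, hpa⟩
    obtain ⟨P, hPm, hPdeg, hPa⟩ := exists_monic_natDegree_eq_eval₂_eq_zero _ hpm hpc hpa
    exact (natDegree_minpoly_le_of_comp_eq hφ hPm hPa).trans (hPdeg ▸ hpdeg)

/-- Specialization lemma for integral extensions of polynomial rings: if `A` is a finitely
generated `K`-algebra (`K` an infinite field), integral over a polynomial subring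
`B = K[t₁,…,t_d]`, and `u ≠ 0` satisfies a monic polynomial of degree `≤ k` over `B`, then
there is a `K`-algebra homomorphism `φ : A → K̂` mapping `B` into `K` and `u` to a nonzero
element; in particular any element of degree `≤ m` over `B` is sent to an element of degree
`≤ m` over `K`. -/
theorem specialization_of_integral_over_polynomials
    {K : Type*} [Field K] [Infinite K]
    {A : Type*} [CommRing A] [IsDomain A] [Algebra K A] [Algebra.FiniteType K A]
    (d : ℕ) (ι : MvPolynomial (Fin d) K →ₐ[K] A) (hinj : Function.Injective ι)
    (hint : ∀ a : A, ∃ p : Polynomial A,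
      p.Monic ∧ (∀ i, p.coeff i ∈ ι.range) ∧ p.eval a = 0)
    (u : A) (hu : u ≠ 0) (k : ℕ)
    (hu_deg : ∃ p : Polynomial A,
      p.Monic ∧ p.natDegree ≤ k ∧ (∀ i, p.coeff i ∈ ι.range) ∧ p.eval u = 0) :
    ∃ φ : A →ₐ[K] AlgebraicClosure K,
      (∀ b ∈ ι.range, ∃ c : K, φ b = algebraMap K (AlgebraicClosure K) c) ∧
      φ u ≠ 0 ∧
      ∀ (a : A) (m : ℕ),
        (∃ p : Polynomial A,
          p.Monic ∧ p.natDegree ≤ m ∧ (∀ i, p.coeff i ∈ ι.range) ∧ p.eval a = 0) →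
        (minpoly K (φ a)).natDegree ≤ m :=
  specialization_of_integral_over_polynomials_general d ι hinj hint u hu
end
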